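/- arXiv:2408.13553 — 8 statements merged into one kernel-verified Lean document; each statement's English description precedes it below -/
import Mathlib

section
/- Let A and D be self-adjoint positive definite operators on a finite-dimensional real Hilbert space with A ≤ γD for some γ > 0. If 2σ ≥ γ, then the explicit-implicit scheme (y^{n+1}-y^n)/τ + D(σ y^{n+1} + (1-σ)y^n) + (A-D)y^n = 0 satisfies ‖y^{n+1}‖_A ≤ ‖y^0‖_A for all n. -/
open scoped RealInnerProductSpace

theorem stmt_1 {H : Type*} [NormedAddCommGroup H] [InnerProductSpace ℝ H]
    [FiniteDimensional ℝ H]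
    (A D : H →ₗ[ℝ] H) (hA : A.IsSymmetric) (hD : D.IsSymmetric)
    (hApos : ∀ u : H, u ≠ 0 → 0 < ⟪A u, u⟫)
    (hDpos : ∀ u : H, u ≠ 0 → 0 < ⟪D u, u⟫)
    (γ : ℝ) (hγ : 0 < γ)
    (hAD : ∀ u : H, ⟪A u, u⟫ ≤ γ * ⟪D u, u⟫)
    (σ τ : ℝ) (hτ : 0 < τ) (hσ : γ ≤ 2 * σ)
    (y : ℕ → H)
    (hy : ∀ n : ℕ,
      τ⁻¹ • (y (n + 1) - y n) + D (σ • y (n + 1) + (1 - σ) • y n) + (A - D) (y n) = 0) :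
    ∀ n : ℕ, Real.sqrt ⟪A (y (n + 1)), y (n + 1)⟫ ≤ Real.sqrt ⟪A (y 0), y 0⟫ := by
  have step : ∀ n : ℕ, ⟪A (y (n + 1)), y (n + 1)⟫ ≤ ⟪A (y n), y n⟫ := by
    intro n
    set v := y (n + 1) - y n with hv
    have heq : τ⁻¹ • v + σ • D v + A (y n) = 0 := by
      have := hy n
      rw [show (σ • y (n + 1) + (1 - σ) • y n) = σ • v + y n by
        rw [hv]; module] at this
      simp only [map_add, map_smul, map_sub, LinearMap.sub_apply] at this ⊢
      linear_combination (norm := module) this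
    have hinner : τ⁻¹ * ⟪v, v⟫ + σ * ⟪D v, v⟫ + ⟪A (y n), v⟫ = 0 := by
      have := congrArg (fun w => ⟪w, v⟫) heq
      simpa [inner_add_left, real_inner_smul_left] using this
    have hDnn : 0 ≤ ⟪D v, v⟫ := by
      by_cases h : v = 0
      · simp [h]
      · exact le_of_lt (hDpos v h)
    have hAv : ⟪A v, v⟫ ≤ γ * ⟪D v, v⟫ := hAD v
    have hvnn : 0 ≤ ⟪v, v⟫ := real_inner_self_nonneg
    have hexp : ⟪A (y (n + 1)), y (n + 1)⟫
        = ⟪A (y n), y n⟫ + 2 * ⟪A (y n), v⟫ + ⟪A v, v⟫ := by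
      have hy1 : y (n + 1) = y n + v := by rw [hv]; abel
      have hsym : ⟪A v, y n⟫ = ⟪A (y n), v⟫ := by
        rw [hA v (y n), real_inner_comm]
      rw [hy1]
      simp only [map_add, inner_add_left, inner_add_right, hsym]
      ring
    have hτinv : 0 < τ⁻¹ := inv_pos.mpr hτ
    rw [hexp]
    nlinarith [mul_nonneg (le_of_lt hτinv) hvnn, mul_nonneg hDnn hvnn]
  have mono : ∀ n : ℕ, ⟪A (y n), y n⟫ ≤ ⟪A (y 0), y 0⟫ := by
    intro n
    induction n with
    | zero => exact le_rfl
    | succ k ih => exact le_trans (step k) ih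
  intro n
  exact Real.sqrt_le_sqrt (mono (n + 1))
end

section
/- Let A be self-adjoint positive definite on a finite-dimensional real Hilbert space and write A = L + D + L* where D is self-adjoint positive definite and L is linear. Then the explicit-implicit scheme (y^{n+1}-y^n)/τ + (L+D)y^{n+1} + L* y^n = 0 is unconditionally stable in the energy norm: ‖y^{n+1}‖_A ≤ ‖y^0‖_A for every τ > 0. -/
open scoped RealInnerProductSpace

theorem stmt_2 {H : Type*} [NormedAddCommGroup H] [InnerProductSpace ℝ H]
    [FiniteDimensional ℝ H]
    (A L D Lstar : H →ₗ[ℝ] H)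
    (hLadj : ∀ u v : H, ⟪L u, v⟫ = ⟪u, Lstar v⟫)
    (hsplit : A = L + D + Lstar)
    (hA : A.IsSymmetric) (hApos : ∀ u : H, u ≠ 0 → 0 < ⟪A u, u⟫)
    (hD : D.IsSymmetric) (hDpos : ∀ u : H, u ≠ 0 → 0 < ⟪D u, u⟫)
    (τ : ℝ) (hτ : 0 < τ)
    (y : ℕ → H)
    (hy : ∀ n : ℕ,
      τ⁻¹ • (y (n + 1) - y n) + (L + D) (y (n + 1)) + Lstar (y n) = 0) :
    ∀ n : ℕ, Real.sqrt ⟪A (y (n + 1)), y (n + 1)⟫ ≤ Real.sqrt ⟪A (y 0), y 0⟫ := by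
  have hDnn : ∀ u : H, 0 ≤ ⟪D u, u⟫ := by
    intro u
    by_cases h : u = 0
    · simp [h]
    · exact le_of_lt (hDpos u h)
  have hLstar : ∀ u v : H, ⟪Lstar u, v⟫ = ⟪L v, u⟫ := by
    intro u v
    rw [hLadj v u, real_inner_comm]
  have key : ∀ n : ℕ, ⟪A (y (n + 1)), y (n + 1)⟫ ≤ ⟪A (y n), y n⟫ := by
    intro n
    set a := y n with ha
    set b := y (n + 1) with hb
    have h0 : ⟪τ⁻¹ • (b - a) + (L + D) b + Lstar a, b - a⟫ = (0 : ℝ) := by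
      rw [hy n, inner_zero_left]
    have hDab : ⟪D a, b⟫ = ⟪D b, a⟫ := by
      rw [hD a b, real_inner_comm]
    have hDw : (0 : ℝ) ≤ ⟪D (b - a), b - a⟫ := hDnn _
    have hw : (0 : ℝ) ≤ τ⁻¹ * ⟪b - a, b - a⟫ :=
      mul_nonneg (le_of_lt (inv_pos.mpr hτ)) real_inner_self_nonneg
    simp only [hsplit, LinearMap.add_apply, inner_add_left, inner_sub_left,
      inner_sub_right, inner_add_right, map_sub, real_inner_smul_left,
      hLstar] at h0 hDw hw ⊢
    simp only [real_inner_comm a b] at *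
    nlinarith [h0, hDw, hw, hDab]
  have mono : ∀ n : ℕ, ⟪A (y n), y n⟫ ≤ ⟪A (y 0), y 0⟫ := by
    intro n
    induction n with
    | zero => exact le_refl _
    | succ k ih => exact le_trans (key k) ih
  intro n
  exact Real.sqrt_le_sqrt (mono (n + 1))
end

section
/- Let A = A₁ + A₂ be self-adjoint positive definite on a finite-dimensional real Hilbert space with A₁* = A₂. Then for any σ ≥ 1/2 and τ > 0, the factorized operator B = (I + στA₁)(I + στA₂) is self-adjoint and satisfies B ≥ I + στA ≥ (τ/2)A; consequently the scheme B(y^{n+1}-y^n)/τ + Ay^n = 0 satisfies ‖y^{n+1}‖_A ≤ ‖y^0‖_A. -/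
open scoped RealInnerProductSpace

theorem stmt_3 {H : Type*} [NormedAddCommGroup H] [InnerProductSpace ℝ H]
    [FiniteDimensional ℝ H]
    (A₁ A₂ : H →ₗ[ℝ] H)
    (hadj : ∀ u v : H, ⟪A₁ u, v⟫ = ⟪u, A₂ v⟫)
    (A : H →ₗ[ℝ] H) (hA : A = A₁ + A₂)
    (hAsym : A.IsSymmetric) (hApos : ∀ u : H, u ≠ 0 → 0 < ⟪A u, u⟫)
    (σ τ : ℝ) (hσ : 1 / 2 ≤ σ) (hτ : 0 < τ)
    (B : H →ₗ[ℝ] H)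
    (hB : B = (LinearMap.id + (σ * τ) • A₁) ∘ₗ (LinearMap.id + (σ * τ) • A₂)) :
    B.IsSymmetric ∧
    (∀ u : H, ⟪((LinearMap.id + (σ * τ) • A : H →ₗ[ℝ] H)) u, u⟫ ≤ ⟪B u, u⟫) ∧
    (∀ u : H, (τ / 2) * ⟪A u, u⟫ ≤ ⟪((LinearMap.id + (σ * τ) • A : H →ₗ[ℝ] H)) u, u⟫) ∧
    (∀ y : ℕ → H, (∀ n : ℕ, τ⁻¹ • B (y (n + 1) - y n) + A (y n) = 0) →
      ∀ n : ℕ, Real.sqrt ⟪A (y (n + 1)), y (n + 1)⟫ ≤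
        Real.sqrt ⟪A (y 0), y 0⟫) := by
  have hApsd : ∀ u : H, 0 ≤ ⟪A u, u⟫ := by
    intro u
    rcases eq_or_ne u 0 with h | h
    · simp [h]
    · exact (hApos u h).le
  have hB' : ∀ u v : H, ⟪B u, v⟫ = ⟪u, v⟫ + (σ * τ) * ⟪A u, v⟫
      + (σ * τ)^2 * ⟪A₂ u, A₂ v⟫ := by
    intro u v
    have h1 : ⟪A₁ (A₂ u), v⟫ = ⟪A₂ u, A₂ v⟫ := hadj _ _
    simp only [hB, hA, LinearMap.comp_apply, LinearMap.add_apply, LinearMap.id_apply,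
      LinearMap.smul_apply, map_add, map_smul, inner_add_left, real_inner_smul_left,
      smul_smul]
    rw [h1]; ring
  have hIAu : ∀ u : H, ⟪((LinearMap.id + (σ * τ) • A : H →ₗ[ℝ] H)) u, u⟫
      = ⟪u, u⟫ + (σ * τ) * ⟪A u, u⟫ := by
    intro u
    simp [LinearMap.add_apply, inner_add_left, real_inner_smul_left]
  have hAcomm : ∀ u v : H, ⟪A u, v⟫ = ⟪A v, u⟫ := by
    intro u v; rw [hAsym u v, real_inner_comm]
  have hBsym : B.IsSymmetric := by
    intro u v
    rw [hB' u v, show ⟪u, B v⟫ = ⟪B v, u⟫ from real_inner_comm _ _, hB' v u]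
    rw [hAcomm u v, real_inner_comm (A₂ u) (A₂ v), real_inner_comm u v]
  have hpart2 : ∀ u : H, ⟪((LinearMap.id + (σ * τ) • A : H →ₗ[ℝ] H)) u, u⟫ ≤ ⟪B u, u⟫ := by
    intro u
    rw [hB' u u, hIAu u]
    nlinarith [real_inner_self_nonneg (x := A₂ u), sq_nonneg (σ * τ)]
  have hpart3 : ∀ u : H, (τ / 2) * ⟪A u, u⟫
      ≤ ⟪((LinearMap.id + (σ * τ) • A : H →ₗ[ℝ] H)) u, u⟫ := by
    intro u
    rw [hIAu u]
    have h1 : 0 ≤ (σ - 1 / 2) * τ * ⟪A u, u⟫ :=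
      mul_nonneg (mul_nonneg (by linarith) hτ.le) (hApsd u)
    have h2 : (0:ℝ) ≤ ⟪u, u⟫ := real_inner_self_nonneg
    nlinarith
  refine ⟨hBsym, hpart2, hpart3, ?_⟩
  intro y hy n
  have hKey : ∀ u : H, (τ / 2) * ⟪A u, u⟫ ≤ ⟪B u, u⟫ := fun u =>
    (hpart3 u).trans (hpart2 u)
  have hstep : ∀ m : ℕ, ⟪A (y (m + 1)), y (m + 1)⟫ ≤ ⟪A (y m), y m⟫ := by
    intro m
    set w := y (m + 1) - y m with hw
    have hyw : y (m + 1) = y m + w := by rw [hw]; abel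
    have hAyn : A (y m) = -(τ⁻¹ • B w) := by
      have := hy m
      linear_combination (norm := module) this
    have hinner : ⟪A (y m), w⟫ = -(τ⁻¹ * ⟪B w, w⟫) := by
      rw [hAyn, inner_neg_left, real_inner_smul_left]
    have hexp : ⟪A (y (m + 1)), y (m + 1)⟫
        = ⟪A (y m), y m⟫ + 2 * ⟪A (y m), w⟫ + ⟪A w, w⟫ := by
      rw [hyw, map_add]
      simp only [inner_add_left, inner_add_right]
      have h2 : ⟪A w, y m⟫ = ⟪A (y m), w⟫ := hAcomm w (y m)
      linarith
    have hb := hKey w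
    have hτ' : (0:ℝ) < τ⁻¹ := inv_pos.mpr hτ
    have hττ : τ⁻¹ * τ = 1 := inv_mul_cancel₀ hτ.ne'
    rw [hexp, hinner]
    nlinarith [hApsd w]
  have hmono : ∀ m : ℕ, ⟪A (y m), y m⟫ ≤ ⟪A (y 0), y 0⟫ := by
    intro m
    induction m with
    | zero => exact le_refl _
    | succ k ih => exact (hstep k).trans ih
  exact Real.sqrt_le_sqrt (hmono (n + 1))
end

section
/- Let B, R, A be linear operators on a finite-dimensional real Hilbert space with R and A self-adjoint, B ≥ 0, A > 0 and R > (1/4)A. Then any sequence y^n satisfying the three-level scheme B(y^{n+1}-y^{n-1})/(2τ) + R(y^{n+1} - 2y^n + y^{n-1}) + A y^n = 0 has nonincreasing energy E^{n+1} = (1/4)(A(y^{n+1}+y^n), y^{n+1}+y^n) + (R(y^{n+1}-y^n), y^{n+1}-y^n) - (1/4)(A(y^{n+1}-y^n), y^{n+1}-y^n), i.e., E^{n+1} ≤ E^n for all n ≥ 1. -/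
open scoped RealInnerProductSpace

private lemma sym_expand {H : Type*} [NormedAddCommGroup H] [InnerProductSpace ℝ H]
    (T : H →ₗ[ℝ] H) (hT : T.IsSymmetric) (x z : H) :
    ⟪T (x + z), x + z⟫ = ⟪T x, x⟫ + 2 * ⟪T z, x⟫ + ⟪T z, z⟫ := by
  have h : ⟪T x, z⟫ = ⟪T z, x⟫ := by
    rw [hT x z, real_inner_comm]
  simp only [map_add, inner_add_left, inner_add_right]
  linarith

theorem stmt_5 {H : Type*} [NormedAddCommGroup H] [InnerProductSpace ℝ H]
    [FiniteDimensional ℝ H]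
    (B R A : H →ₗ[ℝ] H)
    (hR : R.IsSymmetric) (hA : A.IsSymmetric)
    (hB : ∀ u : H, 0 ≤ ⟪B u, u⟫)
    (hApos : ∀ u : H, u ≠ 0 → 0 < ⟪A u, u⟫)
    (hRA : ∀ u : H, u ≠ 0 → (1 / 4) * ⟪A u, u⟫ < ⟪R u, u⟫)
    (τ : ℝ) (hτ : 0 < τ)
    (y : ℕ → H)
    (hy : ∀ n : ℕ,
      (2 * τ)⁻¹ • B (y (n + 2) - y n) +
        R (y (n + 2) - (2 : ℝ) • y (n + 1) + y n) + A (y (n + 1)) = 0) :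
    ∀ n : ℕ,
      (1 / 4) * ⟪A (y (n + 2) + y (n + 1)), y (n + 2) + y (n + 1)⟫ +
        ⟪R (y (n + 2) - y (n + 1)), y (n + 2) - y (n + 1)⟫ -
        (1 / 4) * ⟪A (y (n + 2) - y (n + 1)), y (n + 2) - y (n + 1)⟫ ≤
      (1 / 4) * ⟪A (y (n + 1) + y n), y (n + 1) + y n⟫ +
        ⟪R (y (n + 1) - y n), y (n + 1) - y n⟫ -
        (1 / 4) * ⟪A (y (n + 1) - y n), y (n + 1) - y n⟫ := by
  intro n
  set a := y (n + 2) with ha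
  set b := y (n + 1) with hb
  set c := y n with hc
  -- key scalar identity from the scheme
  have key : (2 * τ)⁻¹ * ⟪B (a - c), a - c⟫ +
      ⟪R (a - (2 : ℝ) • b + c), a - c⟫ + ⟪A b, a - c⟫ = 0 := by
    have h := hy n
    have h2 := congrArg (fun v => ⟪v, a - c⟫) h
    simpa [inner_add_left, real_inner_smul_left] using h2
  -- expand R term: a - 2b + c = (a-b) - (b-c), a - c = (a-b)+(b-c)
  have hRterm : ⟪R (a - (2 : ℝ) • b + c), a - c⟫ =
      ⟪R (a - b), a - b⟫ - ⟪R (b - c), b - c⟫ := by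
    have e1 : a - (2 : ℝ) • b + c = (a - b) + (-(b - c)) := by
      simp [two_smul]; abel
    have e2 : a - c = (a - b) + (b - c) := by abel
    rw [e1, e2]
    have h5 : ⟪R (b - c), a - b⟫ = ⟪R (a - b), b - c⟫ := by
      rw [hR, real_inner_comm]
    simp only [map_add, map_neg, inner_add_left, inner_add_right, inner_neg_left,
      inner_neg_right]
    linarith
  -- expand A parts of the energies
  have hAa : ⟪A (a + b), a + b⟫ - ⟪A (a - b), a - b⟫ = 4 * ⟪A b, a⟫ := by
    have e : a - b = a + (-b) := by abel
    rw [e, sym_expand A hA, sym_expand A hA]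
    simp only [map_neg, inner_neg_left, inner_neg_right, neg_neg]
    ring
  have hAb : ⟪A (b + c), b + c⟫ - ⟪A (b - c), b - c⟫ = 4 * ⟪A c, b⟫ := by
    have e : b - c = b + (-c) := by abel
    rw [e, sym_expand A hA, sym_expand A hA]
    simp only [map_neg, inner_neg_left, inner_neg_right, neg_neg]
    ring
  have hAterm : ⟪A b, a - c⟫ = ⟪A b, a⟫ - ⟪A c, b⟫ := by
    have : ⟪A b, c⟫ = ⟪A c, b⟫ := by rw [hA, real_inner_comm]
    rw [inner_sub_right, this]
  have hBpos : 0 ≤ (2 * τ)⁻¹ * ⟪B (a - c), a - c⟫ :=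
    mul_nonneg (by positivity) (hB _)
  rw [hRterm, hAterm] at key
  linarith
end

section
/- Let A₁,...,A_p be self-adjoint positive semidefinite operators on a finite-dimensional real Hilbert space and σ ≥ p/2, τ > 0. Then the regularized additive scheme (w^{n+1} - w^n)/τ + Σ_{α=1}^p (I + στA_α)^{-1} A_α w^n = 0 satisfies ‖w^{n+1}‖ ≤ ‖w^n‖, hence ‖w^n‖ ≤ ‖w^0‖ for all n. -/
open scoped RealInnerProductSpace

theorem stmt_13 {H : Type*} [NormedAddCommGroup H] [InnerProductSpace ℝ H]
    [FiniteDimensional ℝ H]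
    (p : ℕ) (hp : 0 < p) (A : Fin p → (H →ₗ[ℝ] H))
    (hAsym : ∀ α, (A α).IsSymmetric)
    (hApsd : ∀ α, ∀ u : H, 0 ≤ ⟪A α u, u⟫)
    (σ τ : ℝ) (hσ : (p : ℝ) / 2 ≤ σ) (hτ : 0 < τ)
    (w : ℕ → H) (z : ℕ → Fin p → H)
    (hz : ∀ n : ℕ, ∀ α : Fin p, z n α + (σ * τ) • A α (z n α) = A α (w n))
    (hw : ∀ n : ℕ, w (n + 1) = w n - τ • ∑ α, z n α) :
    (∀ n : ℕ, ‖w (n + 1)‖ ≤ ‖w n‖) ∧ (∀ n : ℕ, ‖w n‖ ≤ ‖w 0‖) := by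
  have hp' : (p : ℝ) ≠ 0 := Nat.cast_ne_zero.mpr hp.ne'
  have hppos : (0 : ℝ) < (p : ℝ) := Nat.cast_pos.mpr hp
  have step : ∀ n, ‖w (n + 1)‖ ≤ ‖w n‖ := by
    intro n
    -- key inner product estimate
    have key : ∀ α : Fin p, σ * τ * ‖z n α‖ ^ 2 ≤ ⟪w n, z n α⟫ := by
      intro α
      set u := w n - (σ * τ) • z n α with hu
      have hAu : A α u = z n α := by
        rw [hu, map_sub, map_smul, ← hz n α]
        abel
      have h0 : 0 ≤ ⟪A α u, u⟫ := hApsd α u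
      rw [hAu] at h0
      have hexp : ⟪z n α, u⟫ = ⟪z n α, w n⟫ - σ * τ * ‖z n α‖ ^ 2 := by
        rw [hu, inner_sub_right, inner_smul_right, real_inner_self_eq_norm_sq]
      rw [hexp] at h0
      rw [real_inner_comm]
      linarith
    -- each averaged term has norm at most ‖w n‖
    have bound : ∀ α : Fin p, ‖w n - ((p : ℝ) * τ) • z n α‖ ≤ ‖w n‖ := by
      intro α
      have hsq : ‖w n - ((p : ℝ) * τ) • z n α‖ ^ 2 ≤ ‖w n‖ ^ 2 := by
        rw [norm_sub_sq_real, inner_smul_right, norm_smul, mul_pow]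
        have hk := key α
        have hz2 : 0 ≤ ‖z n α‖ ^ 2 := sq_nonneg _
        have habs : ‖(p : ℝ) * τ‖ ^ 2 = ((p : ℝ) * τ) ^ 2 := by
          rw [Real.norm_eq_abs, sq_abs]
        rw [habs]
        have hA : (p:ℝ) * τ * (σ * τ * ‖z n α‖ ^ 2) ≤ (p:ℝ) * τ * ⟪w n, z n α⟫ :=
          mul_le_mul_of_nonneg_left hk (le_of_lt (mul_pos hppos hτ))
        have hB : 0 ≤ (p:ℝ) * (τ * τ) * ‖z n α‖ ^ 2 * (2 * σ - (p:ℝ)) := by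
          have : 0 ≤ 2 * σ - (p:ℝ) := by linarith
          positivity
        nlinarith [hA, hB]
      have h1 : (0 : ℝ) ≤ ‖w n - ((p : ℝ) * τ) • z n α‖ := norm_nonneg _
      have h2 : (0 : ℝ) ≤ ‖w n‖ := norm_nonneg _
      nlinarith
    -- decomposition of the update as an average
    have hdecomp : w (n + 1) = (p : ℝ)⁻¹ • ∑ α : Fin p, (w n - ((p : ℝ) * τ) • z n α) := by
      rw [hw n, Finset.sum_sub_distrib, Finset.sum_const, Finset.card_univ, Fintype.card_fin,
        ← Finset.smul_sum, Eq.symm (Nat.cast_smul_eq_nsmul ℝ _ _)]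
      rw [smul_sub, smul_smul, smul_smul]
      congr 1
      · rw [inv_mul_cancel₀ hp', one_smul]
      · congr 1
        field_simp
    rw [hdecomp, norm_smul, Real.norm_eq_abs, abs_of_nonneg (by positivity : (0:ℝ) ≤ (p:ℝ)⁻¹)]
    calc (p : ℝ)⁻¹ * ‖∑ α : Fin p, (w n - ((p : ℝ) * τ) • z n α)‖
        ≤ (p : ℝ)⁻¹ * ∑ α : Fin p, ‖w n - ((p : ℝ) * τ) • z n α‖ := by
          apply mul_le_mul_of_nonneg_left (norm_sum_le _ _) (by positivity)
      _ ≤ (p : ℝ)⁻¹ * ∑ _α : Fin p, ‖w n‖ := by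
          apply mul_le_mul_of_nonneg_left (Finset.sum_le_sum fun α _ => bound α) (by positivity)
      _ = ‖w n‖ := by
          rw [Finset.sum_const, Finset.card_univ, Fintype.card_fin, nsmul_eq_mul]
          field_simp
  refine ⟨step, ?_⟩
  intro n
  induction n with
  | zero => exact le_refl _
  | succ n ih => exact (step n).trans ih
end

section
/- For A = A* ≥ 0 on a finite-dimensional real Hilbert space, p ≥ 1, σ ≥ p/2 and τ > 0, the operator T = I - pτ(I + στA)^{-1}A satisfies ‖Tv‖ ≤ ‖v‖ for all v. -/
open scoped RealInnerProductSpace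

theorem stmt_14 {H : Type*} [NormedAddCommGroup H] [InnerProductSpace ℝ H]
    [FiniteDimensional ℝ H]
    (A : H →ₗ[ℝ] H)
    (hA : A.IsSymmetric) (hApsd : ∀ u : H, 0 ≤ ⟪A u, u⟫)
    (p σ τ : ℝ) (hp : 1 ≤ p) (hσ : p / 2 ≤ σ) (hτ : 0 < τ) :
    ∀ v w : H, w + (σ * τ) • A w = A v → ‖v - (p * τ) • w‖ ≤ ‖v‖ := by
  intro v w hvw
  set u : H := v - (σ * τ) • w with hu
  have hwAu : A u = w := by
    simp only [hu, map_sub, map_smul, ← hvw]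
    abel
  have hpos : 0 ≤ ⟪A u, u⟫ := hApsd u
  rw [hwAu, hu, inner_sub_right, real_inner_smul_right] at hpos
  -- so ⟪w, v⟫ ≥ σ τ ⟪w, w⟫
  have hww : (0:ℝ) ≤ ⟪w, w⟫ := real_inner_self_nonneg
  have key : ⟪v - (p * τ) • w, v - (p * τ) • w⟫ ≤ ⟪v, v⟫ := by
    simp only [inner_sub_left, inner_sub_right, real_inner_smul_left,
      real_inner_smul_right, real_inner_comm w v]
    nlinarith [mul_nonneg (mul_nonneg hτ.le hww) hτ.le,
      mul_le_mul_of_nonneg_left hσ (mul_nonneg (mul_nonneg hτ.le hww) hτ.le),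
      mul_pos (lt_of_lt_of_le one_pos hp) hτ]
  calc ‖v - (p * τ) • w‖ = Real.sqrt ⟪v - (p * τ) • w, v - (p * τ) • w⟫ := by
        rw [real_inner_self_eq_norm_mul_norm, Real.sqrt_mul_self (norm_nonneg _)]
    _ ≤ Real.sqrt ⟪v, v⟫ := Real.sqrt_le_sqrt key
    _ = ‖v‖ := by
        rw [real_inner_self_eq_norm_mul_norm, Real.sqrt_mul_self (norm_nonneg _)]
end

section
/- Let A be self-adjoint positive definite with A = L + D + L* where D = D* > 0. Then the operator B = I + τ(L + D), τ > 0, satisfies (Bu,u) ≥ ((I + (τ/2)A)u,u) ≥ (1 + (τ/2)λ_min(A))‖u‖² for all u, where λ_min(A) > 0 is the smallest eigenvalue of A; in particular B is invertible. -/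
open scoped RealInnerProductSpace

theorem stmt_17 {H : Type*} [NormedAddCommGroup H] [InnerProductSpace ℝ H]
    [FiniteDimensional ℝ H]
    (A L D Lstar : H →ₗ[ℝ] H)
    (hLadj : ∀ u v : H, ⟪L u, v⟫ = ⟪u, Lstar v⟫)
    (hsplit : A = L + D + Lstar)
    (hA : A.IsSymmetric) (hApos : ∀ u : H, u ≠ 0 → 0 < ⟪A u, u⟫)
    (hD : D.IsSymmetric) (hDpos : ∀ u : H, u ≠ 0 → 0 < ⟪D u, u⟫)
    (lamMin : ℝ) (hlamPos : 0 < lamMin)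
    (hlam : ∀ u : H, lamMin * ‖u‖ ^ 2 ≤ ⟪A u, u⟫)
    (hlamEig : ∃ u : H, u ≠ 0 ∧ ⟪A u, u⟫ = lamMin * ‖u‖ ^ 2)
    (τ : ℝ) (hτ : 0 < τ)
    (B : H →ₗ[ℝ] H) (hB : B = LinearMap.id + τ • (L + D)) :
    (∀ u : H, ⟪((LinearMap.id + (τ / 2) • A : H →ₗ[ℝ] H)) u, u⟫ ≤ ⟪B u, u⟫) ∧
    (∀ u : H, (1 + (τ / 2) * lamMin) * ‖u‖ ^ 2 ≤
      ⟪((LinearMap.id + (τ / 2) • A : H →ₗ[ℝ] H)) u, u⟫) ∧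
    Function.Bijective B := by
  have hDnn : ∀ u : H, 0 ≤ ⟪D u, u⟫ := by
    intro u
    by_cases hu : u = 0
    · simp [hu]
    · exact le_of_lt (hDpos u hu)
  have hLu : ∀ u : H, ⟪L u, u⟫ = (⟪A u, u⟫ - ⟪D u, u⟫) / 2 := by
    intro u
    have h1 : ⟪A u, u⟫ = ⟪L u, u⟫ + ⟪D u, u⟫ + ⟪Lstar u, u⟫ := by
      simp [hsplit, inner_add_left]
    have h2 : ⟪Lstar u, u⟫ = ⟪L u, u⟫ := by
      rw [real_inner_comm, ← hLadj]
    rw [h2] at h1; linarith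
  have key : ∀ u : H, ⟪B u, u⟫ =
      ‖u‖ ^ 2 + (τ / 2) * ⟪A u, u⟫ + (τ / 2) * ⟪D u, u⟫ := by
    intro u
    simp only [hB, LinearMap.add_apply, LinearMap.id_apply, LinearMap.smul_apply,
      inner_add_left, inner_smul_left, real_inner_self_eq_norm_sq, starRingEnd_apply, star_trivial]
    rw [hLu u]; ring
  have keyI : ∀ u : H, ⟪((LinearMap.id + (τ / 2) • A : H →ₗ[ℝ] H)) u, u⟫ =
      ‖u‖ ^ 2 + (τ / 2) * ⟪A u, u⟫ := by
    intro u
    simp [LinearMap.add_apply, inner_add_left, inner_smul_left, starRingEnd_apply, star_trivial,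
      real_inner_self_eq_norm_sq]
  have h1 : ∀ u : H, ⟪((LinearMap.id + (τ / 2) • A : H →ₗ[ℝ] H)) u, u⟫ ≤ ⟪B u, u⟫ := by
    intro u
    rw [key, keyI]
    nlinarith [hDnn u]
  have h2 : ∀ u : H, (1 + (τ / 2) * lamMin) * ‖u‖ ^ 2 ≤
      ⟪((LinearMap.id + (τ / 2) • A : H →ₗ[ℝ] H)) u, u⟫ := by
    intro u
    rw [keyI]
    nlinarith [hlam u]
  refine ⟨h1, h2, ?_⟩
  have hinj : Function.Injective B := by
    rw [← LinearMap.ker_eq_bot, LinearMap.ker_eq_bot']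
    intro u hu
    by_contra hne
    have := h2 u
    have := h1 u
    have hpos : 0 < (1 + (τ / 2) * lamMin) * ‖u‖ ^ 2 := by
      have : 0 < ‖u‖ := norm_pos_iff.mpr hne
      positivity
    rw [hu] at *
    simp at *
    nlinarith
  exact ⟨hinj, (LinearMap.injective_iff_surjective).mp hinj⟩
end

section
/- Let A₁* = A₂ and A = A₁ + A₂ be positive definite on a finite-dimensional real Hilbert space. The Peaceman–Rachford scheme, defined by (I + (τ/2)A₁)y^{n+1/2} = (I - (τ/2)A₂)y^n and (I + (τ/2)A₂)y^{n+1} = (I - (τ/2)A₁)y^{n+1/2}, is equivalent to the factorized scheme (I + (τ/2)A₁)(I + (τ/2)A₂)(y^{n+1} - y^n)/τ + A y^n = 0, and consequently ‖y^{n+1}‖_A ≤ ‖y^n‖_A for every τ > 0. -/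
open scoped RealInnerProductSpace

theorem stmt_19 {H : Type*} [NormedAddCommGroup H] [InnerProductSpace ℝ H]
    [FiniteDimensional ℝ H]
    (A₁ A₂ : H →ₗ[ℝ] H)
    (hadj : ∀ u v : H, ⟪A₁ u, v⟫ = ⟪u, A₂ v⟫)
    (A : H →ₗ[ℝ] H) (hA : A = A₁ + A₂)
    (hAsym : A.IsSymmetric) (hApos : ∀ u : H, u ≠ 0 → 0 < ⟪A u, u⟫)
    (τ : ℝ) (hτ : 0 < τ)
    (y yh : ℕ → H)
    (h1 : ∀ n : ℕ, yh n + (τ / 2) • A₁ (yh n) = y n - (τ / 2) • A₂ (y n))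
    (h2 : ∀ n : ℕ, y (n + 1) + (τ / 2) • A₂ (y (n + 1)) = yh n - (τ / 2) • A₁ (yh n)) :
    (∀ n : ℕ,
      ((LinearMap.id + (τ / 2) • A₁) ∘ₗ (LinearMap.id + (τ / 2) • A₂))
        (τ⁻¹ • (y (n + 1) - y n)) + A (y n) = 0) ∧
    (∀ n : ℕ, Real.sqrt ⟪A (y (n + 1)), y (n + 1)⟫ ≤
      Real.sqrt ⟪A (y n), y n⟫) := by
  have hτ0 : τ ≠ 0 := ne_of_gt hτ
  -- key identity without inverses
  have hT : ∀ n : ℕ,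
      ((LinearMap.id + (τ / 2) • A₁) ∘ₗ (LinearMap.id + (τ / 2) • A₂))
        (y (n + 1) - y n) = -(τ • A (y n)) := by
    intro n
    have e1 := h1 n
    have e2 := h2 n
    have e1' := congrArg A₁ e1
    have e2' := congrArg A₁ e2
    simp only [map_add, map_sub, map_smul] at e1' e2'
    rw [hA]
    simp only [LinearMap.comp_apply, LinearMap.add_apply, LinearMap.smul_apply,
      LinearMap.id_apply, map_add, map_sub, map_smul]
    linear_combination (norm := module) e2 + ((τ/2) • e2') + e1 - ((τ/2) • e1')
  have part1 : ∀ n : ℕ,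
      ((LinearMap.id + (τ / 2) • A₁) ∘ₗ (LinearMap.id + (τ / 2) • A₂))
        (τ⁻¹ • (y (n + 1) - y n)) + A (y n) = 0 := by
    intro n
    rw [map_smul, hT n, smul_neg, smul_smul, inv_mul_cancel₀ hτ0, one_smul,
      neg_add_cancel]
  refine ⟨part1, fun n => ?_⟩
  set u := y (n + 1) with hu
  set v := y n with hv
  have hTw : (u - v) + ((τ/2) • A₁ (u - v) + ((τ/2) • A₂ (u - v)
      + ((τ/2)*(τ/2)) • A₁ (A₂ (u - v)))) = -(τ • A v) := by
    have h := hT n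
    simp only [LinearMap.comp_apply, LinearMap.add_apply, LinearMap.smul_apply,
      LinearMap.id_apply, map_add, map_sub, map_smul, ← hu, ← hv] at h ⊢
    linear_combination (norm := module) h
  set w := u - v with hw
  have hip := congrArg (fun z => ⟪z, w⟫) hTw
  simp only [inner_add_left, inner_neg_left, real_inner_smul_left] at hip
  have hA12 : ⟪A₁ w, w⟫ + ⟪A₂ w, w⟫ = ⟪A w, w⟫ := by
    rw [hA]; simp [inner_add_left]
  have hA1A2 : ⟪A₁ (A₂ w), w⟫ = ⟪A₂ w, A₂ w⟫ := hadj _ _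
  have hA2nn : (0:ℝ) ≤ ⟪A₂ w, A₂ w⟫ := real_inner_self_nonneg
  have hwnn : (0:ℝ) ≤ ⟪w, w⟫ := real_inner_self_nonneg
  have hsym : ⟪A v, u⟫ = ⟪A u, v⟫ := by
    rw [hAsym v u, real_inner_comm]
  have hAvw : ⟪A v, w⟫ = ⟪A u, v⟫ - ⟪A v, v⟫ := by
    rw [hw, inner_sub_right, hsym]
  have hAww : ⟪A w, w⟫ = ⟪A u, u⟫ - 2 * ⟪A u, v⟫ + ⟪A v, v⟫ := by
    rw [hw, map_sub, inner_sub_left, inner_sub_right, inner_sub_right, hsym]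
    ring
  have key : ⟪A u, u⟫ ≤ ⟪A v, v⟫ := by
    nlinarith [hip, hA12, hA1A2, hA2nn, hwnn, hAvw, hAww, hτ]
  exact Real.sqrt_le_sqrt key
end
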